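/- In the monoid O_2 presented by generators α_1, β_1 with relations α_1² = α_1, β_1² = β_1, (α_1β_1)² = α_1β_1, and (β_1α_1)² = β_1α_1, the set of nonidentity elements is exactly {α_1, β_1, α_1β_1, β_1α_1, α_1β_1α_1, β_1α_1β_1}, and these six elements are pairwise distinct; hence |O_2| = 7. -/

import Mathlib

/-! The seven words `1, α, β, αβ, βα, αβα, βαβ` are closed under left multiplication by `α`
and `β` (using only the four idempotence relations), so they exhaust `O₂`. To separate them, let `α`
and `β` act on seven points as they would act by left multiplication on these words: the relations
hold for these transformations, and the seven words send the point standing for `1` to seven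
different points. -/

namespace OrigamiTwo

/-- The two generators `α₁` and `β₁` of `O₂`. -/
inductive G2 : Type
  | a : G2
  | b : G2
deriving DecidableEq

open FreeMonoid

/-- The defining relations of `O₂`: idempotence of `α₁`, `β₁`, `α₁β₁`, and `β₁α₁`. -/
inductive Rel2 : FreeMonoid G2 → FreeMonoid G2 → Prop
  | aa : Rel2 (of G2.a * of G2.a) (of G2.a)
  | bb : Rel2 (of G2.b * of G2.b) (of G2.b)
  | abab : Rel2 (of G2.a * of G2.b * (of G2.a * of G2.b)) (of G2.a * of G2.b)
  | baba : Rel2 (of G2.b * of G2.a * (of G2.b * of G2.a)) (of G2.b * of G2.a)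

/-- The congruence generated by the relations of `O₂`. -/
def con2 : Con (FreeMonoid G2) := conGen Rel2

/-- The origami monoid `O₂`. -/
abbrev O2 := con2.Quotient

/-- The generator `α₁` of `O₂`. -/
def A : O2 := con2.mk' (of G2.a)

/-- The generator `β₁` of `O₂`. -/
def B : O2 := con2.mk' (of G2.b)

theorem mk'_eq_of_rel2 {x y : FreeMonoid G2} (h : Rel2 x y) : con2.mk' x = con2.mk' y :=
  (Con.eq _).2 (ConGen.Rel.of _ _ h)

theorem isIdempotentElem_A : IsIdempotentElem A := mk'_eq_of_rel2 .aa

theorem isIdempotentElem_B : IsIdempotentElem B := mk'_eq_of_rel2 .bb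

theorem isIdempotentElem_A_mul_B : IsIdempotentElem (A * B) := mk'_eq_of_rel2 .abab

theorem isIdempotentElem_B_mul_A : IsIdempotentElem (B * A) := mk'_eq_of_rel2 .baba

def normalForms : List O2 := [1, A, B, A * B, B * A, A * B * A, B * A * B]

theorem mul_mem_normalForms {g y : O2} (hg : g = A ∨ g = B) (hy : y ∈ normalForms) :
    g * y ∈ normalForms := by
  have hAB := isIdempotentElem_A_mul_B.eq
  have hBA := isIdempotentElem_B_mul_A.eq
  simp only [mul_assoc] at hAB hBA
  simp only [normalForms, List.mem_cons, List.not_mem_nil, or_false] at hy ⊢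
  rcases hg with rfl | rfl <;> rcases hy with rfl | rfl | rfl | rfl | rfl | rfl | rfl <;>
    simp [mul_assoc, isIdempotentElem_A.eq, isIdempotentElem_B.eq,
      isIdempotentElem_A.mul_self_mul, isIdempotentElem_B.mul_self_mul, hAB, hBA]

theorem mem_normalForms (x : O2) : x ∈ normalForms := by
  obtain ⟨w, rfl⟩ := Con.mk'_surjective x
  induction w using FreeMonoid.inductionOn' with
  | one => simp [normalForms]
  | of_mul g w ih =>
    rw [map_mul]
    exact mul_mem_normalForms (by cases g <;> simp [A, B]) ih

instance : DecidableEq (Function.End (Fin 7)) := inferInstanceAs (DecidableEq (Fin 7 → Fin 7))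

-- The point `i : Fin 7` stands for the `i`-th entry of `normalForms`.
def leftMulA : Function.End (Fin 7) := ![1, 1, 3, 3, 5, 5, 3]

def leftMulB : Function.End (Fin 7) := ![2, 4, 2, 6, 4, 4, 6]

def leftMul : O2 →* Function.End (Fin 7) :=
  con2.lift (FreeMonoid.lift fun | .a => leftMulA | .b => leftMulB) <|
    Con.conGen_le.2 fun _ _ h => by cases h <;> rw [Con.ker_rel] <;> decide

theorem map_leftMul_normalForms_apply_zero :
    normalForms.map (fun x => leftMul x 0) = List.finRange 7 := by
  decide

theorem normalForms_nodup : normalForms.Nodup :=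
  .of_map _ (map_leftMul_normalForms_apply_zero ▸ List.nodup_finRange 7)

end OrigamiTwo

open OrigamiTwo in
/-- The nonidentity elements of `O₂` are exactly
`α₁, β₁, α₁β₁, β₁α₁, α₁β₁α₁, β₁α₁β₁`, these six elements are pairwise distinct,
and hence `|O₂| = 7`. -/
theorem origami_two_elements :
    ({x : O2 | x ≠ 1} = {A, B, A * B, B * A, A * B * A, B * A * B}) ∧
    ([A, B, A * B, B * A, A * B * A, B * A * B] : List O2).Nodup ∧
    Nat.card O2 = 7 := by
  have hnodup := normalForms_nodup
  rw [normalForms, List.nodup_cons] at hnodup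
  refine ⟨?_, hnodup.2, ?_⟩
  · ext x
    have hx := mem_normalForms x
    simp only [normalForms, List.mem_cons, List.not_mem_nil, or_false] at hx hnodup
    simp only [Set.mem_ofPred_eq, Set.mem_insert_iff, Set.mem_singleton_iff]
    aesop
  · classical
    exact Nat.card_eq_of_equiv_fin
      (normalForms_nodup.getEquivOfForallMemList _ mem_normalForms).symm
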